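/- Let g : [0,∞) → ℝ be a positive, strictly increasing, differentiable function, let k > 0, let p be a positive integer, let q ∈ (0,1), and let λ > 0 and μ > 0 be real numbers. Then the function S(t) = g(t)^λ·k^{−λ g(t)/k}·e^{λ γ g(t)/k}·[p]_q^{μ g(t)}·Γ_k(g(t))^λ / Γ_{(p,q)}(g(t))^μ is strictly increasing on [0,∞); that is, for all 0 ≤ s < t we have S(s) < S(t). -/

import Mathlib

open Real

/-- `[p]_q = (1 - q^p)/(1 - q)` -/
noncomputable def pnq (p : ℕ) (q : ℝ) : ℝ := (1 - q ^ p) / (1 - q)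

/-- q-psi function via its series representation. -/
noncomputable def psiq (q s : ℝ) : ℝ :=
  -Real.log (1 - q) + Real.log q * ∑' n : ℕ, q ^ (((n : ℝ) + 1) * s) / (1 - q ^ (n + 1))

/-- (p,q)-psi function via its series representation. -/
noncomputable def psipq (p : ℕ) (q s : ℝ) : ℝ :=
  Real.log (pnq p q) +
    Real.log q * ∑ n ∈ Finset.range p, q ^ (((n : ℝ) + 1) * s) / (1 - q ^ (n + 1))

/-- k-psi function via its series representation. -/
noncomputable def psik (k s : ℝ) : ℝ :=
  (Real.log k - Real.eulerMascheroniConstant) / k - 1 / s +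
    ∑' n : ℕ, s / (((n : ℝ) + 1) * k * (((n : ℝ) + 1) * k + s))

/-- (q,k)-psi function via its series representation. -/
noncomputable def psiqk (q k s : ℝ) : ℝ :=
  -Real.log (1 - q) / k +
    Real.log q * ∑' n : ℕ, q ^ (((n : ℝ) + 1) * k * s) / (1 - q ^ (((n : ℝ) + 1) * k))

/-- Normalized q-Gamma function. -/
noncomputable def Gammaq (q s : ℝ) : ℝ :=
  (1 - q) ^ (-s) *
    Real.exp (∑' n : ℕ, q ^ (((n : ℝ) + 1) * s) / (((n : ℝ) + 1) * (1 - q ^ (n + 1))))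

/-- Normalized (p,q)-Gamma function. -/
noncomputable def Gammapq (p : ℕ) (q s : ℝ) : ℝ :=
  (pnq p q) ^ s *
    Real.exp (∑ n ∈ Finset.range p, q ^ (((n : ℝ) + 1) * s) / (((n : ℝ) + 1) * (1 - q ^ (n + 1))))

/-- Normalized (q,k)-Gamma function. -/
noncomputable def Gammaqk (q k s : ℝ) : ℝ :=
  (1 - q) ^ (-s / k) *
    Real.exp (∑' n : ℕ,
      q ^ (((n : ℝ) + 1) * k * s) / (((n : ℝ) + 1) * k * (1 - q ^ (((n : ℝ) + 1) * k))))

/-- k-Gamma function. -/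
noncomputable def Gammak (k s : ℝ) : ℝ :=
  ∫ x in Set.Ioi (0 : ℝ), Real.exp (-(x ^ k) / k) * x ^ (s - 1)

/-!
Since `Γ_k(x) = k^(x/k - 1) Γ(x/k)` and `Γ_{(p,q)}(x) = [p]_q^x · exp(σ(x))` with `σ` a finite sum of
decreasing exponentials, the function equals `(e^{γy} Γ(y + 1))^λ · e^{-μ σ(x)}` with `y = x/k`.
The first factor is nondecreasing in `y ≥ 0`: `log Γ` is convex with derivative `-γ` at `1`, so its
secant slopes on `[1, ∞)` are at least `-γ`. The second factor is strictly increasing.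
-/

open Set

theorem Gammak_eq_rpow_mul_Gamma {k s : ℝ} (hk : 0 < k) (hs : 0 < s) :
    Gammak k s = k ^ (s / k - 1) * Gamma (s / k) := by
  have h := integral_rpow_mul_exp_neg_mul_rpow (p := k) (q := s - 1) (b := 1 / k) hk
    (by linarith) (by positivity)
  rw [sub_add_cancel, one_div, inv_rpow hk.le, ← rpow_neg hk.le, neg_div, neg_neg] at h
  rw [Gammak, rpow_sub_one hk.ne', div_eq_mul_inv, ← h]
  refine MeasureTheory.setIntegral_congr_fun measurableSet_Ioi fun x _ => ?_
  ring_nf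

theorem mul_rpow_mul_Gammak {k x : ℝ} (hk : 0 < k) (hx : 0 < x) :
    x * k ^ (-(x / k)) * Gammak k x = Gamma (x / k + 1) := by
  rw [Gammak_eq_rpow_mul_Gamma hk hx, Gamma_add_one (div_pos hx hk).ne', rpow_sub_one hk.ne',
    rpow_neg hk.le]
  field_simp

theorem pnq_pos {p : ℕ} {q : ℝ} (hp : 0 < p) (hq0 : 0 < q) (hq1 : q < 1) : 0 < pnq p q :=
  div_pos (by linarith [pow_lt_one₀ hq0.le hq1 hp.ne']) (by linarith)

noncomputable def GammapqSum (p : ℕ) (q s : ℝ) : ℝ :=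
  ∑ n ∈ Finset.range p, q ^ (((n : ℝ) + 1) * s) / (((n : ℝ) + 1) * (1 - q ^ (n + 1)))

theorem rpow_div_Gammapq {p : ℕ} {q : ℝ} (hc : 0 < pnq p q) (s : ℝ) :
    pnq p q ^ s / Gammapq p q s = exp (-GammapqSum p q s) := by
  rw [Gammapq, ← GammapqSum, exp_neg, div_mul_cancel_left₀ (rpow_pos_of_pos hc s).ne']

theorem GammapqSum_strictAnti {p : ℕ} {q : ℝ} (hp : 0 < p) (hq0 : 0 < q) (hq1 : q < 1) :
    StrictAnti (GammapqSum p q) := by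
  intro a b hab
  refine Finset.sum_lt_sum_of_nonempty (Finset.nonempty_range_iff.2 hp.ne') fun n _ => ?_
  have hqn : q ^ (n + 1) < 1 := pow_lt_one₀ hq0.le hq1 n.succ_ne_zero
  exact div_lt_div_of_pos_right (rpow_lt_rpow_of_exponent_gt hq0 hq1 (by gcongr))
    (mul_pos (by positivity) (by linarith))

theorem rpow_mul_Gammak_div_Gammapq_eq {k x : ℝ} {p : ℕ} {q : ℝ} (hk : 0 < k) (hc : 0 < pnq p q)
    (hx : 0 < x) (lam mu : ℝ) :
    x ^ lam * k ^ (-(lam * x / k)) * exp (lam * eulerMascheroniConstant * x / k) *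
        pnq p q ^ (mu * x) * Gammak k x ^ lam / Gammapq p q x ^ mu =
      (exp (eulerMascheroniConstant * (x / k)) * Gamma (x / k + 1)) ^ lam *
        exp (-GammapqSum p q x) ^ mu := by
  have hGk : 0 < Gammak k x := by
    rw [Gammak_eq_rpow_mul_Gamma hk hx]
    exact mul_pos (by positivity) (Gamma_pos_of_pos (by positivity))
  have hGpq : 0 < Gammapq p q x := mul_pos (rpow_pos_of_pos hc x) (exp_pos _)
  rw [← mul_rpow_mul_Gammak hk hx, ← rpow_div_Gammapq hc, mul_rpow (by positivity) (by positivity),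
    mul_rpow (by positivity) (by positivity), mul_rpow (by positivity) (by positivity),
    div_rpow (by positivity) hGpq.le, ← rpow_mul hk.le, ← rpow_mul hc.le, ← exp_mul]
  ring_nf

theorem ConvexOn.le_slope_of_hasDerivAt_of_le {S : Set ℝ} {f : ℝ → ℝ} {f' x₀ x y : ℝ}
    (hfc : ConvexOn ℝ S f) (hx₀ : x₀ ∈ S) (hx : x ∈ S) (hy : y ∈ S) (hx₀x : x₀ ≤ x)
    (hxy : x < y) (hf' : HasDerivAt f f' x₀) : f' ≤ slope f x y :=
  calc f' ≤ slope f x₀ y := hfc.le_slope_of_hasDerivAt hx₀ hy (hx₀x.trans_lt hxy) hf'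
    _ = slope f y x₀ := slope_comm f x₀ y
    _ ≤ slope f y x := hfc.slope_mono hy ⟨hx₀, (hx₀x.trans_lt hxy).ne⟩ ⟨hx, hxy.ne⟩ hx₀x
    _ = slope f x y := slope_comm f y x

theorem hasDerivAt_log_Gamma_one : HasDerivAt (log ∘ Gamma) (-eulerMascheroniConstant) 1 := by
  simpa [Function.comp_def] using hasDerivAt_Gamma_one.log (by simp)

theorem monotoneOn_exp_mul_Gamma_add_one :
    MonotoneOn (fun y => exp (eulerMascheroniConstant * y) * Gamma (y + 1)) (Ici 0) := by
  intro a (ha : 0 ≤ a) b _ hab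
  rcases hab.eq_or_lt with rfl | hab
  · rfl
  have hslope : -eulerMascheroniConstant ≤ slope (log ∘ Gamma) (a + 1) (b + 1) :=
    convexOn_log_Gamma.le_slope_of_hasDerivAt_of_le (mem_Ioi.2 one_pos)
      (mem_Ioi.2 (by linarith)) (mem_Ioi.2 (by linarith)) (by linarith)
      (by linarith) hasDerivAt_log_Gamma_one
  rw [slope_def_field, le_div_iff₀ (by linarith)] at hslope
  have hΓa := Gamma_pos_of_pos (show (0 : ℝ) < a + 1 by linarith)
  have hΓb := Gamma_pos_of_pos (show (0 : ℝ) < b + 1 by linarith)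
  calc exp (eulerMascheroniConstant * a) * Gamma (a + 1)
      = exp (eulerMascheroniConstant * a + log (Gamma (a + 1))) := by rw [exp_add, exp_log hΓa]
    _ ≤ exp (eulerMascheroniConstant * b + log (Gamma (b + 1))) := by
      simp only [Function.comp_apply] at hslope
      exact exp_le_exp.2 (by linarith)
    _ = exp (eulerMascheroniConstant * b) * Gamma (b + 1) := by rw [exp_add, exp_log hΓb]

theorem stmt10_general (g : ℝ → ℝ) (hgpos : ∀ t ∈ Set.Ici (0 : ℝ), 0 < g t)
    (hgmono : StrictMonoOn g (Set.Ici (0 : ℝ)))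
    (k : ℝ) (hk : 0 < k) (p : ℕ) (hp : 0 < p) (q : ℝ) (hq : q ∈ Set.Ioo (0 : ℝ) 1)
    (lam mu : ℝ) (hlam : 0 < lam) (hmu : 0 < mu) :
    ∀ s t : ℝ, 0 ≤ s → s < t →
      (g s) ^ lam * k ^ (-(lam * g s / k)) *
          Real.exp (lam * Real.eulerMascheroniConstant * g s / k) * (pnq p q) ^ (mu * g s) *
          (Gammak k (g s)) ^ lam / (Gammapq p q (g s)) ^ mu <
        (g t) ^ lam * k ^ (-(lam * g t / k)) *
          Real.exp (lam * Real.eulerMascheroniConstant * g t / k) * (pnq p q) ^ (mu * g t) *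
          (Gammak k (g t)) ^ lam / (Gammapq p q (g t)) ^ mu := by
  intro s t hs hst
  obtain ⟨hq0, hq1⟩ := hq
  have ht : t ∈ Ici (0 : ℝ) := hs.trans hst.le
  have hgs := hgpos s hs
  have hgt := hgpos t ht
  have hlt : g s < g t := hgmono hs ht hst
  have hc := pnq_pos hp hq0 hq1
  rw [rpow_mul_Gammak_div_Gammapq_eq hk hc hgs, rpow_mul_Gammak_div_Gammapq_eq hk hc hgt]
  have hGamma := rpow_le_rpow (by positivity)
    (monotoneOn_exp_mul_Gamma_add_one (div_pos hgs hk).le (div_pos hgt hk).le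
      (div_le_div_of_nonneg_right hlt.le hk.le)) hlam.le
  have hpq : exp (-GammapqSum p q (g s)) ^ mu < exp (-GammapqSum p q (g t)) ^ mu :=
    rpow_lt_rpow (exp_pos _).le (exp_lt_exp.2 (neg_lt_neg (GammapqSum_strictAnti hp hq0 hq1 hlt)))
      hmu
  exact mul_lt_mul' hGamma hpq (by positivity) (by positivity)

theorem stmt10 (g : ℝ → ℝ) (hgpos : ∀ t ∈ Set.Ici (0 : ℝ), 0 < g t)
    (hgmono : StrictMonoOn g (Set.Ici (0 : ℝ)))
    (hgdiff : DifferentiableOn ℝ g (Set.Ici (0 : ℝ)))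
    (k : ℝ) (hk : 0 < k) (p : ℕ) (hp : 0 < p) (q : ℝ) (hq : q ∈ Set.Ioo (0 : ℝ) 1)
    (lam mu : ℝ) (hlam : 0 < lam) (hmu : 0 < mu) :
    ∀ s t : ℝ, 0 ≤ s → s < t →
      (g s) ^ lam * k ^ (-(lam * g s / k)) *
          Real.exp (lam * Real.eulerMascheroniConstant * g s / k) * (pnq p q) ^ (mu * g s) *
          (Gammak k (g s)) ^ lam / (Gammapq p q (g s)) ^ mu <
        (g t) ^ lam * k ^ (-(lam * g t / k)) *
          Real.exp (lam * Real.eulerMascheroniConstant * g t / k) * (pnq p q) ^ (mu * g t) *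
          (Gammak k (g t)) ^ lam / (Gammapq p q (g t)) ^ mu :=
  stmt10_general g hgpos hgmono k hk p hp q hq lam mu hlam hmu
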